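/- Let G ∈ 𝕆^{n×k} with tr(GᵀD) ≠ 0 be a local maximizer of η on 𝕆^{n×k}. Then for every real n×k matrix J, (tr(DᵀJ) − tr(GᵀD JᵀG))² / η(G) ≤ tr(Jᵀ E(G) J) − tr(Jᵀ G M(G) Gᵀ J) + ξ(G)·tr(Jᵀ G DᵀG Gᵀ J) + tr(Gᵀ J M(G) Jᵀ G) − tr(J M(G) Jᵀ). -/

import Mathlib

open Matrix

/-- The objective `η(G) = tr(GᵀD)² / tr(GᵀAG)`. -/
noncomputable def eta {n k : ℕ} (A : Matrix (Fin n) (Fin n) ℝ)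
    (D G : Matrix (Fin n) (Fin k) ℝ) : ℝ :=
  (Matrix.trace (Gᵀ * D)) ^ 2 / Matrix.trace (Gᵀ * A * G)

/-- `ξ(G) = tr(GᵀAG) / tr(GᵀD)`. -/
noncomputable def xi {n k : ℕ} (A : Matrix (Fin n) (Fin n) ℝ)
    (D G : Matrix (Fin n) (Fin k) ℝ) : ℝ :=
  Matrix.trace (Gᵀ * A * G) / Matrix.trace (Gᵀ * D)

/-- `sym(B) = (B + Bᵀ)/2`. -/
noncomputable def symPart {k : ℕ} (B : Matrix (Fin k) (Fin k) ℝ) : Matrix (Fin k) (Fin k) ℝ :=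
  (1 / 2 : ℝ) • (B + Bᵀ)

/-- `M(G) = sym(GᵀAG − ξ(G)·GᵀD)`. -/
noncomputable def Mmat {n k : ℕ} (A : Matrix (Fin n) (Fin n) ℝ)
    (D G : Matrix (Fin n) (Fin k) ℝ) : Matrix (Fin k) (Fin k) ℝ :=
  symPart (Gᵀ * A * G - xi A D G • (Gᵀ * D))

/-- `E(G) = A − ξ(G)·(DGᵀ + GDᵀ)`. -/
noncomputable def Emat {n k : ℕ} (A : Matrix (Fin n) (Fin n) ℝ)
    (D G : Matrix (Fin n) (Fin k) ℝ) : Matrix (Fin n) (Fin n) ℝ :=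
  A - xi A D G • (D * Gᵀ + G * Dᵀ)

/-- The Frobenius norm of a real matrix. -/
noncomputable def frobNorm {n k : ℕ} (M : Matrix (Fin n) (Fin k) ℝ) : ℝ :=
  Real.sqrt (∑ i, ∑ j, (M i j) ^ 2)

/-- `G` is a local maximizer of `η` on the Stiefel manifold `𝕆^{n×k}`. -/
def IsLocalMaxEta {n k : ℕ} (A : Matrix (Fin n) (Fin n) ℝ)
    (D G : Matrix (Fin n) (Fin k) ℝ) : Prop :=
  Gᵀ * G = 1 ∧ ∃ ε > (0 : ℝ), ∀ G' : Matrix (Fin n) (Fin k) ℝ,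
    G'ᵀ * G' = 1 → frobNorm (G' - G) < ε → eta A D G' ≤ eta A D G

/-!
For skew-symmetric `W`, the curve `t ↦ exp(tW) G` stays on the Stiefel manifold, so
`t ↦ tr(GᵀAG)·tr(γᵀD)² - tr(GᵀD)²·tr(γᵀAγ)` has a local maximum (namely `0`) at `t = 0`.
For a normal direction `K` (`GᵀK = 0`) and `W = K Gᵀ - G Kᵀ`, the curve has velocity `K` and
acceleration `-G KᵀK`, and the vanishing first derivative and nonpositive second derivative read
`tr(KᵀAG) = ξ tr(KᵀD)` and `tr(KᵀD)²/η ≤ tr(KᵀAK) - tr(K M Kᵀ)`. For `K = J - GGᵀJ` the left side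
of the claim is `tr(KᵀD)²/η`, and its right side is `tr(KᵀAK) - tr(K M Kᵀ)` plus twice the
first-order defect of the normal direction `K JᵀG`, which vanishes.
-/

open Topology

section MatrixCalculus

variable {l m p : Type*} {t : ℝ}

theorem hasDerivAt_const_matrix [Fintype m] [Fintype p] (B : Matrix m p ℝ) (t : ℝ) :
    HasDerivAt (fun _ : ℝ => B) 0 t :=
  hasDerivAt_pi.2 fun i => hasDerivAt_pi.2 fun j => hasDerivAt_const t (B i j)

theorem HasDerivAt.matrix_continuousAt [Fintype m] [Fintype p] {A : ℝ → Matrix m p ℝ}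
    {A' : Matrix m p ℝ} (hA : HasDerivAt A A' t) : ContinuousAt A t :=
  continuousAt_pi.2 fun i => continuousAt_pi.2 fun j =>
    (hasDerivAt_pi.1 (hasDerivAt_pi.1 hA i) j).continuousAt

theorem HasDerivAt.matrix_transpose [Fintype l] [Fintype m] {A : ℝ → Matrix l m ℝ}
    {A' : Matrix l m ℝ} (hA : HasDerivAt A A' t) : HasDerivAt (fun s => (A s)ᵀ) A'ᵀ t :=
  hasDerivAt_pi.2 fun i => hasDerivAt_pi.2 fun j => hasDerivAt_pi.1 (hasDerivAt_pi.1 hA j) i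

theorem HasDerivAt.matrix_mul [Fintype l] [Fintype m] [Fintype p] {A : ℝ → Matrix l m ℝ}
    {B : ℝ → Matrix m p ℝ} {A' : Matrix l m ℝ} {B' : Matrix m p ℝ} (hA : HasDerivAt A A' t)
    (hB : HasDerivAt B B' t) :
    HasDerivAt (fun s => A s * B s) (A' * B t + A t * B') t := by
  have hA' i j : HasDerivAt (fun s => A s i j) (A' i j) t :=
    hasDerivAt_pi.1 (hasDerivAt_pi.1 hA i) j
  have hB' i j : HasDerivAt (fun s => B s i j) (B' i j) t :=
    hasDerivAt_pi.1 (hasDerivAt_pi.1 hB i) j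
  refine hasDerivAt_pi.2 fun i => hasDerivAt_pi.2 fun j => ?_
  simpa [Matrix.mul_apply, Finset.sum_add_distrib] using
    HasDerivAt.fun_sum fun r _ => (hA' i r).mul (hB' r j)

theorem HasDerivAt.matrix_trace [Fintype m] {A : ℝ → Matrix m m ℝ} {A' : Matrix m m ℝ}
    (hA : HasDerivAt A A' t) : HasDerivAt (fun s => trace (A s)) (trace A') t :=
  HasDerivAt.fun_sum fun i _ => hasDerivAt_pi.1 (hasDerivAt_pi.1 hA i) i

theorem HasDerivAt.trace_transpose_mul [Fintype l] [Fintype m] {γ : ℝ → Matrix l m ℝ}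
    {γ' : Matrix l m ℝ} (hγ : HasDerivAt γ γ' t) (D : Matrix l m ℝ) :
    HasDerivAt (fun s => trace ((γ s)ᵀ * D)) (trace (γ'ᵀ * D)) t := by
  simpa using (hγ.matrix_transpose.matrix_mul (hasDerivAt_const_matrix D t)).matrix_trace

theorem HasDerivAt.trace_transpose_mul_mul [Fintype l] [Fintype m] {γ δ : ℝ → Matrix l m ℝ}
    {γ' δ' : Matrix l m ℝ} (hγ : HasDerivAt γ γ' t) (A : Matrix l l ℝ) (hδ : HasDerivAt δ δ' t) :
    HasDerivAt (fun s => trace ((γ s)ᵀ * A * δ s))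
      (trace (γ'ᵀ * A * δ t) + trace ((γ t)ᵀ * A * δ')) t := by
  simpa [Matrix.mul_add, trace_add] using
    ((hγ.matrix_transpose.matrix_mul (hasDerivAt_const_matrix A t)).matrix_mul hδ).matrix_trace

theorem Matrix.hasDerivAt_exp_smul [Fintype m] [DecidableEq m] (W : Matrix m m ℝ) (t : ℝ) :
    HasDerivAt (fun s : ℝ => NormedSpace.exp (s • W)) (NormedSpace.exp (t • W) * W) t := by
  let _ : NormedRing (Matrix m m ℝ) := Matrix.linftyOpNormedRing
  let _ : NormedAlgebra ℝ (Matrix m m ℝ) := Matrix.linftyOpNormedAlgebra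
  exact hasDerivAt_exp_smul_const W t

end MatrixCalculus

theorem IsLocalMax.hasDerivAt_deriv_nonpos {f f' : ℝ → ℝ} {a c : ℝ} (h : IsLocalMax f a)
    (hf : ∀ x, HasDerivAt f (f' x) x) (hf' : HasDerivAt f' c a) : c ≤ 0 := by
  -- if `c > 0`, then `a` is also a local minimum, so `f` is constant near `a` and `c = 0`
  by_contra! hc
  have hff' : deriv f = f' := funext fun x => (hf x).deriv
  have hmin : IsLocalMin f a := isLocalMin_of_deriv_deriv_pos (by rwa [hff', hf'.deriv])
    h.deriv_eq_zero (hf a).continuousAt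
  have hconst : f =ᶠ[𝓝 a] fun _ => f a :=
    (h.and hmin).mono fun _ hx => le_antisymm hx.1 hx.2
  have hzero : f' =ᶠ[𝓝 a] fun _ => 0 :=
    hconst.eventuallyEq_nhds.mono fun x hx => by rw [← hff', hx.deriv_eq, deriv_const]
  rw [hzero.hasDerivAt_iff] at hf'
  exact hc.ne' (hf'.unique (hasDerivAt_const a 0))

section Stiefel

variable {m ι : Type*} [Fintype m] [Fintype ι]

theorem Matrix.transpose_exp_smul_mul_exp_smul [DecidableEq m] {W : Matrix m m ℝ} (hW : Wᵀ = -W)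
    (t : ℝ) :
    (NormedSpace.exp (t • W))ᵀ * NormedSpace.exp (t • W) = 1 := by
  rw [← Matrix.exp_transpose, transpose_smul, hW, smul_neg,
    ← Matrix.exp_add_of_commute _ _ ((Commute.refl (t • W)).neg_left), neg_add_cancel,
    NormedSpace.exp_zero]

theorem exists_stiefel_curve_of_transpose_mul_eq_zero [DecidableEq m] [DecidableEq ι]
    {G K : Matrix m ι ℝ} (hG : Gᵀ * G = 1) (hK : Gᵀ * K = 0) :
    ∃ γ γ' : ℝ → Matrix m ι ℝ, γ 0 = G ∧ (∀ t, (γ t)ᵀ * γ t = 1) ∧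
      (∀ t, HasDerivAt γ (γ' t) t) ∧ γ' 0 = K ∧ HasDerivAt γ' (-(G * (Kᵀ * K))) 0 := by
  set W := K * Gᵀ - G * Kᵀ
  have hW : Wᵀ = -W := by simp [W, transpose_sub, transpose_mul]
  have hKG : Kᵀ * G = 0 := by simpa using congrArg transpose hK
  have hWG : W * G = K := by simp [W, Matrix.sub_mul, Matrix.mul_assoc, hG, hKG]
  have hWK : W * K = -(G * (Kᵀ * K)) := by simp [W, Matrix.sub_mul, Matrix.mul_assoc, hK]
  refine ⟨fun t => NormedSpace.exp (t • W) * G, fun t => NormedSpace.exp (t • W) * (W * G),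
    by simp, fun t => ?_, fun t => ?_, by simp [hWG], ?_⟩
  · rw [transpose_mul, Matrix.mul_assoc, ← Matrix.mul_assoc _ _ G,
      Matrix.transpose_exp_smul_mul_exp_smul hW, Matrix.one_mul, hG]
  · simpa [Matrix.mul_assoc] using
      (hasDerivAt_exp_smul W t).matrix_mul (hasDerivAt_const_matrix G t)
  · simpa [hWG, hWK] using
      (hasDerivAt_exp_smul W 0).matrix_mul (hasDerivAt_const_matrix (W * G) 0)

theorem Matrix.PosDef.trace_transpose_mul_mul_pos [DecidableEq ι] [Nonempty ι] {A : Matrix m m ℝ}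
    (hA : A.PosDef) {Γ : Matrix m ι ℝ} (hΓ : Γᵀ * Γ = 1) : 0 < trace (Γᵀ * A * Γ) := by
  have hinj : Function.Injective Γ.mulVec := Function.LeftInverse.injective (g := Γᵀ.mulVec)
    fun x => by rw [mulVec_mulVec, hΓ, one_mulVec]
  simpa using (hA.conjTranspose_mul_mul_same hinj).trace_pos

theorem Matrix.nonempty_of_trace_ne_zero {R : Type*} [AddCommMonoid R] {M : Matrix ι ι R}
    (h : trace M ≠ 0) : Nonempty ι := by
  by_contra hι
  rw [not_nonempty_iff] at hι
  exact h (by simp [trace])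

theorem Matrix.trace_transpose_mul_mul_comm {R : Type*} [CommSemiring R] {A : Matrix m m R}
    (hA : Aᵀ = A) (X Y : Matrix m ι R) :
    trace (Xᵀ * A * Y) = trace (Yᵀ * A * X) := by
  rw [← trace_transpose, transpose_mul, transpose_mul, transpose_transpose, hA, Matrix.mul_assoc]

end Stiefel

theorem continuous_frobNorm {n k : ℕ} : Continuous (frobNorm : Matrix (Fin n) (Fin k) ℝ → ℝ) := by
  unfold frobNorm
  fun_prop

section TraceAlgebra

variable {m ι : Type*} [Fintype m] [Fintype ι]

theorem trace_transpose_mul_sub_trace_mul_transpose_mul (D G J : Matrix m ι ℝ) :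
    trace (Dᵀ * J) - trace (Gᵀ * D * Jᵀ * G) = trace ((J - G * (Gᵀ * J))ᵀ * D) := by
  have h1 : trace (Dᵀ * J) = trace (Jᵀ * D) := by
    rw [← trace_transpose, transpose_mul, transpose_transpose]
  have h2 : trace (Gᵀ * D * Jᵀ * G) = trace (Jᵀ * (G * (Gᵀ * D))) := by
    rw [trace_mul_comm, ← Matrix.mul_assoc, trace_mul_comm]
  rw [h1, h2]
  simp only [transpose_sub, transpose_mul, transpose_transpose, Matrix.sub_mul, trace_sub,
    Matrix.mul_assoc]

theorem trace_mul_mul_transpose_sub_proj [DecidableEq ι] {G : Matrix m ι ℝ} (hG : Gᵀ * G = 1)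
    (J : Matrix m ι ℝ) (M : Matrix ι ι ℝ) :
    trace ((J - G * (Gᵀ * J)) * M * (J - G * (Gᵀ * J))ᵀ)
      = trace (J * M * Jᵀ) - trace (Gᵀ * J * M * Jᵀ * G) := by
  have hK : (J - G * (Gᵀ * J))ᵀ * (J - G * (Gᵀ * J)) = Jᵀ * J - (Gᵀ * J)ᵀ * (Gᵀ * J) := by
    simp only [transpose_sub, transpose_mul, transpose_transpose, Matrix.sub_mul, Matrix.mul_sub,
      Matrix.mul_assoc]
    rw [← Matrix.mul_assoc Gᵀ G, hG, Matrix.one_mul]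
    abel
  have hGJ : Gᵀ * J * M * Jᵀ * G = Gᵀ * J * M * (Gᵀ * J)ᵀ := by
    rw [transpose_mul, transpose_transpose, Matrix.mul_assoc _ Jᵀ]
  rw [hGJ, trace_mul_cycle, hK, Matrix.sub_mul, trace_sub, trace_mul_cycle J,
    trace_mul_cycle (Gᵀ * J)]

end TraceAlgebra

theorem trace_mul_symPart_mul_transpose {ι : Type*} [Fintype ι] {k : ℕ} (X : Matrix ι (Fin k) ℝ)
    (M : Matrix (Fin k) (Fin k) ℝ) : trace (X * symPart M * Xᵀ) = trace (X * M * Xᵀ) := by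
  have : trace (X * Mᵀ * Xᵀ) = trace (X * M * Xᵀ) := by
    rw [← trace_transpose, transpose_mul, transpose_mul, transpose_transpose, transpose_transpose,
      Matrix.mul_assoc]
  rw [symPart, Matrix.mul_smul, Matrix.smul_mul, trace_smul, Matrix.mul_add, Matrix.add_mul,
    trace_add, this, smul_eq_mul]
  ring

theorem trace_Emat_sub_trace_Mmat_add {n k : ℕ} {A : Matrix (Fin n) (Fin n) ℝ} (hA : Aᵀ = A)
    (D G J : Matrix (Fin n) (Fin k) ℝ) :
    trace (Jᵀ * Emat A D G * J) - trace (Jᵀ * G * Mmat A D G * Gᵀ * J)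
        + xi A D G * trace (Jᵀ * G * (Dᵀ * G) * Gᵀ * J)
      = trace ((J - G * (Gᵀ * J))ᵀ * A * (J - G * (Gᵀ * J)))
        + 2 * (trace (((J - G * (Gᵀ * J)) * (Jᵀ * G))ᵀ * A * G)
          - xi A D G * trace (((J - G * (Gᵀ * J)) * (Jᵀ * G))ᵀ * D)) := by
  have hM := trace_mul_symPart_mul_transpose (Jᵀ * G) (Gᵀ * A * G - xi A D G • (Gᵀ * D))
  simp only [transpose_mul, transpose_transpose, ← Matrix.mul_assoc] at hM
  -- the `c`s rotate and the `t`s transpose the traces that the expansion below produces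
  have c1 := trace_mul_comm (Jᵀ * D) (Gᵀ * J)
  have c2 := trace_mul_comm (Jᵀ * G * Gᵀ * D) (Gᵀ * J)
  have c3 := trace_mul_comm (Jᵀ * A * G) (Gᵀ * J)
  have c4 := trace_mul_comm (Jᵀ * G * Gᵀ * A * G) (Gᵀ * J)
  have t1 := trace_transpose (Jᵀ * D * Gᵀ * J)
  have t2 := trace_transpose (Jᵀ * G * Gᵀ * D * Gᵀ * J)
  have t3 := trace_transpose (Jᵀ * A * G * Gᵀ * J)
  simp only [transpose_mul, transpose_transpose, hA, Matrix.mul_assoc] at c1 c2 c3 c4 t1 t2 t3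
  rw [Mmat, hM, Emat]
  simp only [Matrix.mul_sub, Matrix.sub_mul, Matrix.mul_add, Matrix.add_mul, Matrix.smul_mul,
    Matrix.mul_smul, transpose_sub, transpose_mul, transpose_transpose, trace_sub, trace_add,
    trace_smul, smul_eq_mul, Matrix.mul_assoc]
  linear_combination (-xi A D G) * t1 - 2 * xi A D G * c1 + xi A D G * t2 + 2 * xi A D G * c2
    + t3 + 2 * c3 - 2 * c4

namespace IsLocalMaxEta

variable {n k : ℕ} {A : Matrix (Fin n) (Fin n) ℝ} {D G : Matrix (Fin n) (Fin k) ℝ}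

/-- `η(γ t) ≤ η(G)` with the (positive) denominators cleared. -/
theorem isLocalMax_along_curve (hA : A.PosDef) (htr : trace (Gᵀ * D) ≠ 0)
    (hloc : IsLocalMaxEta A D G) {γ : ℝ → Matrix (Fin n) (Fin k) ℝ} (hγc : ContinuousAt γ 0)
    (hγ0 : γ 0 = G) (hγ : ∀ t, (γ t)ᵀ * γ t = 1) :
    IsLocalMax (fun t => trace (Gᵀ * A * G) * trace ((γ t)ᵀ * D) ^ 2
      - trace (Gᵀ * D) ^ 2 * trace ((γ t)ᵀ * A * γ t)) 0 := by
  obtain ⟨hG, ε, hε, hmax⟩ := hloc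
  have := nonempty_of_trace_ne_zero htr
  have hnear : ∀ᶠ t in 𝓝 0, frobNorm (γ t - G) < ε :=
    (continuous_frobNorm.continuousAt.comp (hγc.sub continuousAt_const)).eventually_lt
      continuousAt_const (by simpa [hγ0, frobNorm] using hε)
  filter_upwards [hnear] with t ht
  have hle := hmax (γ t) (hγ t) ht
  rw [eta, eta, div_le_div_iff₀ (hA.trace_transpose_mul_mul_pos (hγ t))
    (hA.trace_transpose_mul_mul_pos hG)] at hle
  simp only [hγ0]
  linarith

theorem first_order_of_curve (hA : A.PosDef) (htr : trace (Gᵀ * D) ≠ 0)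
    (hloc : IsLocalMaxEta A D G) {γ : ℝ → Matrix (Fin n) (Fin k) ℝ} {v : Matrix (Fin n) (Fin k) ℝ}
    (hγ0 : γ 0 = G) (hγ : ∀ t, (γ t)ᵀ * γ t = 1) (hv : HasDerivAt γ v 0) :
    trace (Gᵀ * A * G) * trace (vᵀ * D) = trace (Gᵀ * D) * trace (vᵀ * A * G) := by
  have hAT : Aᵀ = A := by simpa using hA.1.eq
  have hφ := (((hv.trace_transpose_mul D).fun_pow 2).const_mul (trace (Gᵀ * A * G))).fun_sub
    ((hv.trace_transpose_mul_mul A hv).const_mul (trace (Gᵀ * D) ^ 2))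
  have h0 :=
    (isLocalMax_along_curve hA htr hloc hv.matrix_continuousAt hγ0 hγ).hasDerivAt_eq_zero hφ
  simp only [hγ0, trace_transpose_mul_mul_comm hAT G v] at h0
  have : trace (Gᵀ * D) * (trace (Gᵀ * A * G) * trace (vᵀ * D)
      - trace (Gᵀ * D) * trace (vᵀ * A * G)) = 0 := by linear_combination h0 / 2
  linarith [(mul_eq_zero.1 this).resolve_left htr]

theorem second_order_of_curve (hA : A.PosDef) (htr : trace (Gᵀ * D) ≠ 0)
    (hloc : IsLocalMaxEta A D G) {γ γ' : ℝ → Matrix (Fin n) (Fin k) ℝ}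
    {a : Matrix (Fin n) (Fin k) ℝ} (hγ0 : γ 0 = G) (hγ : ∀ t, (γ t)ᵀ * γ t = 1)
    (hd : ∀ t, HasDerivAt γ (γ' t) t) (hd' : HasDerivAt γ' a 0) :
    trace (Gᵀ * A * G) * trace ((γ' 0)ᵀ * D) ^ 2
        + trace (Gᵀ * A * G) * trace (Gᵀ * D) * trace (aᵀ * D)
      ≤ trace (Gᵀ * D) ^ 2 * (trace (aᵀ * A * G) + trace ((γ' 0)ᵀ * A * γ' 0)) := by
  have hAT : Aᵀ = A := by simpa using hA.1.eq
  have hφ t : HasDerivAt (fun s => trace (Gᵀ * A * G) * trace ((γ s)ᵀ * D) ^ 2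
        - trace (Gᵀ * D) ^ 2 * trace ((γ s)ᵀ * A * γ s))
      (2 * trace (Gᵀ * A * G) * trace ((γ t)ᵀ * D) * trace ((γ' t)ᵀ * D)
        - trace (Gᵀ * D) ^ 2 * (trace ((γ' t)ᵀ * A * γ t) + trace ((γ t)ᵀ * A * γ' t))) t :=
    ((((hd t).trace_transpose_mul D).fun_pow 2).const_mul _).fun_sub
      (((hd t).trace_transpose_mul_mul A (hd t)).const_mul _) |>.congr_deriv (by ring)
  have hφ' := ((((hd 0).trace_transpose_mul D).const_mul (2 * trace (Gᵀ * A * G))).fun_mul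
    (hd'.trace_transpose_mul D)).fun_sub (((hd'.trace_transpose_mul_mul A (hd 0)).fun_add
    ((hd 0).trace_transpose_mul_mul A hd')).const_mul (trace (Gᵀ * D) ^ 2))
  have h := (isLocalMax_along_curve hA htr hloc (hd 0).matrix_continuousAt hγ0 hγ)
    |>.hasDerivAt_deriv_nonpos hφ hφ'
  simp only [hγ0, trace_transpose_mul_mul_comm hAT G a] at h
  linarith

theorem first_order (hA : A.PosDef) (htr : trace (Gᵀ * D) ≠ 0) (hloc : IsLocalMaxEta A D G)
    {K : Matrix (Fin n) (Fin k) ℝ} (hK : Gᵀ * K = 0) :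
    trace (Kᵀ * A * G) = xi A D G * trace (Kᵀ * D) := by
  obtain ⟨γ, γ', hγ0, hγ, hd, hK0, -⟩ :=
    exists_stiefel_curve_of_transpose_mul_eq_zero hloc.1 hK
  have h := first_order_of_curve hA htr hloc hγ0 hγ (hK0 ▸ hd 0)
  rw [xi, div_mul_eq_mul_div, eq_div_iff htr]
  linarith

theorem second_order (hA : A.PosDef) (htr : trace (Gᵀ * D) ≠ 0) (hloc : IsLocalMaxEta A D G)
    {K : Matrix (Fin n) (Fin k) ℝ} (hK : Gᵀ * K = 0) :
    trace (Kᵀ * D) ^ 2 / eta A D G ≤ trace (Kᵀ * A * K) - trace (K * Mmat A D G * Kᵀ) := by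
  obtain ⟨γ, γ', hγ0, hγ, hd, hK0, hd'⟩ :=
    exists_stiefel_curve_of_transpose_mul_eq_zero hloc.1 hK
  have h := second_order_of_curve hA htr hloc hγ0 hγ hd hd'
  have hacc (Y : Matrix (Fin n) (Fin k) ℝ) :
      trace ((-(G * (Kᵀ * K)))ᵀ * Y) = -trace (K * (Gᵀ * Y) * Kᵀ) := by
    rw [trace_mul_cycle, transpose_neg, Matrix.neg_mul, trace_neg]
    simp only [transpose_mul, transpose_transpose, Matrix.mul_assoc]
  rw [hK0, hacc, Matrix.mul_assoc (-(G * (Kᵀ * K)))ᵀ A G, hacc] at h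
  have := nonempty_of_trace_ne_zero htr
  have hQ := hA.trace_transpose_mul_mul_pos hloc.1
  rw [Mmat, trace_mul_symPart_mul_transpose, Matrix.mul_sub, Matrix.sub_mul, trace_sub,
    Matrix.mul_smul, Matrix.smul_mul, trace_smul, smul_eq_mul, eta, xi, div_div_eq_mul_div,
    div_le_iff₀ (by positivity)]
  rw [← Matrix.mul_assoc Gᵀ A G] at h
  field_simp
  linarith

end IsLocalMaxEta

theorem quadratic_inequality_of_localMax_general
    (n k : ℕ)
    (A : Matrix (Fin n) (Fin n) ℝ) (hA : A.PosDef)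
    (D : Matrix (Fin n) (Fin k) ℝ)
    (G : Matrix (Fin n) (Fin k) ℝ)
    (htr : Matrix.trace (Gᵀ * D) ≠ 0)
    (hloc : IsLocalMaxEta A D G) :
    ∀ J : Matrix (Fin n) (Fin k) ℝ,
      (Matrix.trace (Dᵀ * J) - Matrix.trace (Gᵀ * D * Jᵀ * G)) ^ 2 / eta A D G ≤
        Matrix.trace (Jᵀ * Emat A D G * J)
          - Matrix.trace (Jᵀ * G * Mmat A D G * Gᵀ * J)
          + xi A D G * Matrix.trace (Jᵀ * G * (Dᵀ * G) * Gᵀ * J)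
          + Matrix.trace (Gᵀ * J * Mmat A D G * Jᵀ * G)
          - Matrix.trace (J * Mmat A D G * Jᵀ) := by
  intro J
  have hAT : Aᵀ = A := by simpa using hA.1.eq
  have hK : Gᵀ * (J - G * (Gᵀ * J)) = 0 := by
    rw [Matrix.mul_sub, ← Matrix.mul_assoc, hloc.1, Matrix.one_mul, sub_self]
  have hfirst := hloc.first_order hA htr (K := (J - G * (Gᵀ * J)) * (Jᵀ * G))
    (by rw [← Matrix.mul_assoc, hK, Matrix.zero_mul])
  have hE := trace_Emat_sub_trace_Mmat_add hAT D G J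
  have hM := trace_mul_mul_transpose_sub_proj hloc.1 J (Mmat A D G)
  rw [trace_transpose_mul_sub_trace_mul_transpose_mul]
  linarith [hloc.second_order hA htr hK]

/-- at a local maximizer `G` of `η` on `𝕆^{n×k}`, for every `J ∈ ℝ^{n×k}`:
`(tr(DᵀJ) − tr(GᵀD JᵀG))²/η(G) ≤ tr(JᵀE(G)J) − tr(JᵀG M(G) GᵀJ) + ξ(G)·tr(JᵀG DᵀG GᵀJ)
 + tr(GᵀJ M(G) JᵀG) − tr(J M(G) Jᵀ)`. -/
theorem quadratic_inequality_of_localMax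
    (n k : ℕ) (hk1 : 1 ≤ k) (hkn : k < n)
    (A : Matrix (Fin n) (Fin n) ℝ) (hA : A.PosDef)
    (D : Matrix (Fin n) (Fin k) ℝ)
    (G : Matrix (Fin n) (Fin k) ℝ)
    (htr : Matrix.trace (Gᵀ * D) ≠ 0)
    (hloc : IsLocalMaxEta A D G) :
    ∀ J : Matrix (Fin n) (Fin k) ℝ,
      (Matrix.trace (Dᵀ * J) - Matrix.trace (Gᵀ * D * Jᵀ * G)) ^ 2 / eta A D G ≤
        Matrix.trace (Jᵀ * Emat A D G * J)
          - Matrix.trace (Jᵀ * G * Mmat A D G * Gᵀ * J)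
          + xi A D G * Matrix.trace (Jᵀ * G * (Dᵀ * G) * Gᵀ * J)
          + Matrix.trace (Gᵀ * J * Mmat A D G * Jᵀ * G)
          - Matrix.trace (J * Mmat A D G * Jᵀ) :=
  quadratic_inequality_of_localMax_general n k A hA D G htr hloc
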